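/- arXiv:2305.12216 — 3 statements merged into one kernel-verified Lean document; each statement's English description precedes it below -/
import Mathlib

section
/- Let E = EuclideanSpace ℝ (Fin d), J : E → ℝ differentiable with L̂-Lipschitz gradient satisfying ‖∇J(θ)‖ ≤ Ĝ for all θ ∈ E, λ > L̂, and θ̂(w) the unique global maximizer of θ ↦ J(θ) − (λ/2)‖θ − w‖². Then for every w ∈ E, ‖λ(θ̂(w) − w)‖ ≤ Ĝ; equivalently, the gradient of the Moreau-envelope value V(w) = sup_θ [J(θ) − (λ/2)‖θ − w‖²] satisfies ‖∇V(w)‖ ≤ Ĝ. -/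
/-!
At the maximiser `θ̂ = θ̂(w)` the first-order condition reads `∇J(θ̂) = λ (θ̂ - w)`, so
`‖λ (θ̂ - w)‖ ≤ Ĝ` is immediate. For the envelope `V`, comparing `V(w')` with the value of the
objective for `w'` at `θ̂(w)`, and `V(w)` with the value for `w` at `θ̂(w')`, squeezes
`V(w') - V(w) - ⟪λ (θ̂(w) - w), w' - w⟫` between `-λ/2 ‖w' - w‖²` and
`λ ⟪θ̂(w') - θ̂(w), w' - w⟫ - λ/2 ‖w' - w‖²`. Subtracting the first-order conditions at `w` and `w'`
shows that `θ̂` is Lipschitz with constant `|λ| / (λ - L̂)`, so the error is `O(‖w' - w‖²)` and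
`∇V(w) = λ (θ̂(w) - w)`.
-/

open InnerProductSpace Asymptotics Filter Topology
open scoped RealInnerProductSpace

variable {E : Type*} [NormedAddCommGroup E] [InnerProductSpace ℝ E]

theorem norm_sub_sq_sub_norm_sub_sq (a w w' : E) :
    ‖a - w‖ ^ 2 - ‖a - w'‖ ^ 2 = 2 * ⟪a - w, w' - w⟫ - ‖w' - w‖ ^ 2 := by
  have h := norm_sub_sq_real (a - w) (w' - w)
  rw [sub_sub_sub_cancel_right] at h
  linarith

variable [CompleteSpace E]

theorem hasGradientAt_of_abs_sub_inner_le {f : E → ℝ} {g x : E} (C : ℝ)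
    (h : ∀ y, |f y - f x - ⟪g, y - x⟫| ≤ C * ‖y - x‖ ^ 2) : HasGradientAt f g x := by
  rw [hasGradientAt_iff_isLittleO]
  have hsq : (fun y => ‖y - x‖ ^ 2) =o[𝓝 x] fun y => y - x :=
    (isLittleO_norm_pow_id one_lt_two).comp_tendsto (tendsto_sub_nhds_zero_iff.2 tendsto_id)
  refine (IsBigO.of_bound C (Eventually.of_forall fun y => ?_)).trans_isLittleO hsq
  simpa [Real.norm_eq_abs] using h y

theorem gradient_eq_smul_sub_of_forall_le {J : E → ℝ} {lam : ℝ} {w θ₀ : E}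
    (hJ : DifferentiableAt ℝ J θ₀)
    (hmax : ∀ θ, J θ - lam / 2 * ‖θ - w‖ ^ 2 ≤ J θ₀ - lam / 2 * ‖θ₀ - w‖ ^ 2) :
    gradient J θ₀ = lam • (θ₀ - w) := by
  have hderiv := hJ.hasFDerivAt.sub
    (((hasFDerivAt_id θ₀).sub_const w).norm_sq.const_mul (lam / 2))
  have hzero := IsLocalMax.hasFDerivAt_eq_zero (Eventually.of_forall hmax) hderiv
  apply (toDual ℝ E).injective
  ext v
  have hv := congrArg (· v) hzero
  simp only [id_eq, map_sub, ContinuousLinearMap.comp_id, sub_apply, smul_apply, coe_innerSL_apply,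
    nsmul_eq_mul, Nat.cast_ofNat, smul_eq_mul, zero_apply] at hv
  rw [toDual_gradient]
  simp only [map_smul, map_sub, smul_apply, sub_apply, toDual_apply_apply, smul_eq_mul]
  linarith

theorem norm_sub_le_of_gradient_eq_smul_sub {J : E → ℝ} {θhat : E → E} {L lam : ℝ}
    (hLip : ∀ x y, ‖gradient J x - gradient J y‖ ≤ L * ‖x - y‖) (hlam : L < lam)
    (hfoc : ∀ w, gradient J (θhat w) = lam • (θhat w - w)) (w w' : E) :
    ‖θhat w' - θhat w‖ ≤ |lam| / (lam - L) * ‖w' - w‖ := by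
  have hsplit : lam • (θhat w' - θhat w) =
      (gradient J (θhat w') - gradient J (θhat w)) + lam • (w' - w) := by
    rw [hfoc, hfoc]
    module
  have hnorm : lam * ‖θhat w' - θhat w‖ ≤ L * ‖θhat w' - θhat w‖ + |lam| * ‖w' - w‖ :=
    calc lam * ‖θhat w' - θhat w‖ ≤ ‖lam • (θhat w' - θhat w)‖ := by
          rw [norm_smul, Real.norm_eq_abs]
          exact mul_le_mul_of_nonneg_right (le_abs_self lam) (norm_nonneg _)
      _ ≤ ‖gradient J (θhat w') - gradient J (θhat w)‖ + ‖lam • (w' - w)‖ := by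
          rw [hsplit]
          exact norm_add_le _ _
      _ ≤ L * ‖θhat w' - θhat w‖ + |lam| * ‖w' - w‖ := by
          rw [norm_smul, Real.norm_eq_abs]
          linarith [hLip (θhat w') (θhat w)]
  rw [div_mul_eq_mul_div, le_div_iff₀ (sub_pos.2 hlam)]
  linarith

theorem hasGradientAt_moreauEnvelope {J V : E → ℝ} {θhat : E → E} {lam K : ℝ} {w : E}
    (hθhat : ∀ w θ, J θ - lam / 2 * ‖θ - w‖ ^ 2 ≤ J (θhat w) - lam / 2 * ‖θhat w - w‖ ^ 2)
    (hV : ∀ w, V w = J (θhat w) - lam / 2 * ‖θhat w - w‖ ^ 2)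
    (hK : ∀ w', ‖θhat w' - θhat w‖ ≤ K * ‖w' - w‖) :
    HasGradientAt V (lam • (θhat w - w)) w := by
  refine hasGradientAt_of_abs_sub_inner_le (|lam| * K + |lam| / 2) fun w' => ?_
  have hlower : lam * ⟪θhat w - w, w' - w⟫ - lam / 2 * ‖w' - w‖ ^ 2 ≤ V w' - V w :=
    calc lam * ⟪θhat w - w, w' - w⟫ - lam / 2 * ‖w' - w‖ ^ 2
        = lam / 2 * (‖θhat w - w‖ ^ 2 - ‖θhat w - w'‖ ^ 2) := by
          rw [norm_sub_sq_sub_norm_sub_sq]; ring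
      _ ≤ V w' - V w := by linarith [hθhat w' (θhat w), hV w', hV w]
  have hupper : V w' - V w ≤ lam * ⟪θhat w' - w, w' - w⟫ - lam / 2 * ‖w' - w‖ ^ 2 :=
    calc V w' - V w ≤ lam / 2 * (‖θhat w' - w‖ ^ 2 - ‖θhat w' - w'‖ ^ 2) := by
          linarith [hθhat w (θhat w'), hV w', hV w]
      _ = lam * ⟪θhat w' - w, w' - w⟫ - lam / 2 * ‖w' - w‖ ^ 2 := by
          rw [norm_sub_sq_sub_norm_sub_sq]; ring
  have hcross : |lam * ⟪θhat w' - θhat w, w' - w⟫| ≤ |lam| * K * ‖w' - w‖ ^ 2 :=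
    calc |lam * ⟪θhat w' - θhat w, w' - w⟫| = |lam| * |⟪θhat w' - θhat w, w' - w⟫| := abs_mul _ _
      _ ≤ |lam| * (‖θhat w' - θhat w‖ * ‖w' - w‖) := by gcongr; exact abs_real_inner_le_norm _ _
      _ ≤ |lam| * (K * ‖w' - w‖ * ‖w' - w‖) := by gcongr; exact hK w'
      _ = |lam| * K * ‖w' - w‖ ^ 2 := by ring
  have hsplit : ⟪θhat w' - w, w' - w⟫ = ⟪θhat w' - θhat w, w' - w⟫ + ⟪θhat w - w, w' - w⟫ := by
    rw [← inner_add_left, sub_add_sub_cancel]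
  rw [real_inner_smul_left, abs_le]
  have hlam : -|lam| ≤ lam := neg_abs_le lam
  have hlam' : lam ≤ |lam| := le_abs_self lam
  constructor <;> nlinarith [abs_le.1 hcross, sq_nonneg ‖w' - w‖]

theorem moreau_envelope_gradient_bound_general
    (d : ℕ)
    (J : EuclideanSpace ℝ (Fin d) → ℝ) (Lhat Ghat lam : ℝ)
    (hJ : Differentiable ℝ J)
    (hLip : ∀ x y, ‖gradient J x - gradient J y‖ ≤ Lhat * ‖x - y‖)
    (hG : ∀ θ : EuclideanSpace ℝ (Fin d), ‖gradient J θ‖ ≤ Ghat)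
    (hlam : Lhat < lam)
    (V : EuclideanSpace ℝ (Fin d) → ℝ)
    (hV : ∀ w, V w = ⨆ θ : EuclideanSpace ℝ (Fin d), (J θ - lam / 2 * ‖θ - w‖ ^ 2))
    (θhat : EuclideanSpace ℝ (Fin d) → EuclideanSpace ℝ (Fin d))
    (hθhat : ∀ w θ : EuclideanSpace ℝ (Fin d),
      J θ - lam / 2 * ‖θ - w‖ ^ 2 ≤ J (θhat w) - lam / 2 * ‖θhat w - w‖ ^ 2) :
    ∀ w : EuclideanSpace ℝ (Fin d),
      ‖lam • (θhat w - w)‖ ≤ Ghat ∧ ‖gradient V w‖ ≤ Ghat := by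
  have hfoc : ∀ w, gradient J (θhat w) = lam • (θhat w - w) := fun w =>
    gradient_eq_smul_sub_of_forall_le (hJ _) (hθhat w)
  have hVmax : ∀ w, V w = J (θhat w) - lam / 2 * ‖θhat w - w‖ ^ 2 := fun w =>
    (hV w).trans <| ciSup_eq_of_forall_le_of_forall_lt_exists_gt (hθhat w) fun _ hb => ⟨θhat w, hb⟩
  intro w
  have hbound : ‖lam • (θhat w - w)‖ ≤ Ghat := hfoc w ▸ hG (θhat w)
  have hgradV := hasGradientAt_moreauEnvelope hθhat hVmax
    (norm_sub_le_of_gradient_eq_smul_sub hLip hlam hfoc w)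
  exact ⟨hbound, hgradV.gradient ▸ hbound⟩

/-- Gradient bound for the Moreau envelope: if `‖∇J‖ ≤ Ĝ` everywhere, then
`‖∇V(w)‖ = ‖λ(θ̂(w) − w)‖ ≤ Ĝ`. -/
theorem moreau_envelope_gradient_bound
    (d : ℕ) (hd : 0 < d)
    (J : EuclideanSpace ℝ (Fin d) → ℝ) (Lhat Ghat lam : ℝ)
    (hLhat : 0 ≤ Lhat) (hJ : Differentiable ℝ J)
    (hLip : ∀ x y, ‖gradient J x - gradient J y‖ ≤ Lhat * ‖x - y‖)
    (hG : ∀ θ : EuclideanSpace ℝ (Fin d), ‖gradient J θ‖ ≤ Ghat)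
    (hlam : Lhat < lam)
    (V : EuclideanSpace ℝ (Fin d) → ℝ)
    (hV : ∀ w, V w = ⨆ θ : EuclideanSpace ℝ (Fin d), (J θ - lam / 2 * ‖θ - w‖ ^ 2))
    (θhat : EuclideanSpace ℝ (Fin d) → EuclideanSpace ℝ (Fin d))
    (hθhat : ∀ w θ : EuclideanSpace ℝ (Fin d),
      J θ - lam / 2 * ‖θ - w‖ ^ 2 ≤ J (θhat w) - lam / 2 * ‖θhat w - w‖ ^ 2) :
    ∀ w : EuclideanSpace ℝ (Fin d),
      ‖lam • (θhat w - w)‖ ≤ Ghat ∧ ‖gradient V w‖ ≤ Ghat :=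
  moreau_envelope_gradient_bound_general d J Lhat Ghat lam hJ hLip hG hlam V hV θhat hθhat
end

section
/- Let E = EuclideanSpace ℝ (Fin d), J : E → ℝ differentiable with L̂-Lipschitz gradient (L̂ ≥ 0), λ > L̂, and V(w) = sup_{θ ∈ E} [J(θ) − (λ/2)‖θ − w‖²]. If θ̃ ∈ E is a ν-approximate stationary point of the inner problem at w, i.e. ‖∇J(θ̃) − λ(θ̃ − w)‖ ≤ ν for some ν ≥ 0, then the approximate envelope gradient λ(θ̃ − w) satisfies ‖λ(θ̃ − w) − ∇V(w)‖ ≤ λν/(λ − L̂). -/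
/-!
The inner objective `θ ↦ J θ - (λ/2)‖θ - w‖²` is `(λ - L̂)`-strongly concave: by the descent
lemma it lies below its value at a critical point `θ̂` by at least `(λ - L̂)/2 ‖θ - θ̂‖²`.
Critical points are the fixed points of the contraction `θ ↦ w + λ⁻¹ ∇J θ`, so `V w` is attained
at such a point `θ̂ w`, and strong monotonicity of `θ ↦ λθ - ∇J θ` makes `θ̂` Lipschitz.
Evaluating the objective at `w'` in the maximizer for `w` bounds `V` from below by quadratic
models with slopes `λ(θ̂ w - w)` at every point; continuity of the slopes then gives
`∇V w = λ(θ̂ w - w)`. Strong monotonicity once more gives `(λ - L̂)‖θ̃ - θ̂ w‖ ≤ ν`.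
-/

open Set Filter Topology Asymptotics
open scoped RealInnerProductSpace

lemma sub_mul_norm_sub_le_norm_smul_sub_sub {F : Type*} [NormedAddCommGroup F]
    [NormedSpace ℝ F] {f : F → F} {L : ℝ} (hf : ∀ x y, ‖f x - f y‖ ≤ L * ‖x - y‖)
    (lam : ℝ) (x y : F) :
    (lam - L) * ‖x - y‖ ≤ ‖lam • (x - y) - (f x - f y)‖ :=
  calc (lam - L) * ‖x - y‖ = lam * ‖x - y‖ - L * ‖x - y‖ := by ring
    _ ≤ ‖lam • (x - y)‖ - ‖f x - f y‖ := by
      rw [norm_smul, Real.norm_eq_abs]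
      gcongr
      · exact le_abs_self lam
      · exact hf x y
    _ ≤ ‖lam • (x - y) - (f x - f y)‖ := norm_sub_norm_le _ _

variable {E : Type*} [NormedAddCommGroup E] [InnerProductSpace ℝ E]

noncomputable def moreauObjective (J : E → ℝ) (lam : ℝ) (w θ : E) : ℝ :=
  J θ - lam / 2 * ‖θ - w‖ ^ 2

lemma moreauObjective_eq (J : E → ℝ) (lam : ℝ) (w₁ w₂ θ : E) :
    moreauObjective J lam w₂ θ =
      moreauObjective J lam w₁ θ + lam * ⟪θ - w₁, w₂ - w₁⟫ - lam / 2 * ‖w₂ - w₁‖ ^ 2 := by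
  have hexpand : ‖θ - w₂‖ ^ 2 = ‖θ - w₁‖ ^ 2 - 2 * ⟪θ - w₁, w₂ - w₁⟫ + ‖w₂ - w₁‖ ^ 2 := by
    rw [← norm_sub_sq_real, sub_sub_sub_cancel_right]
  unfold moreauObjective
  rw [hexpand]
  ring

variable [CompleteSpace E]

theorem hasGradientAt_of_forall_le {V : E → ℝ} {G : E → E} {C : ℝ} {w : E}
    (hG : ContinuousAt G w) (hV : ∀ x y, V x + ⟪G x, y - x⟫ - C * ‖y - x‖ ^ 2 ≤ V y) :
    HasGradientAt V (G w) w := by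
  set φ : E → ℝ := fun y => ‖G y - G w‖ + C * ‖y - w‖
  have hφ : Tendsto φ (𝓝 w) (𝓝 0) := by
    have : Tendsto φ (𝓝 w) (𝓝 (‖G w - G w‖ + C * ‖w - w‖)) :=
      (hG.tendsto.sub tendsto_const_nhds).norm.add
        ((tendsto_id.sub tendsto_const_nhds).norm.const_mul C)
    simpa using this
  have hbound (y : E) : ‖V y - V w - ⟪G w, y - w⟫‖ ≤ ‖φ y * ‖y - w‖‖ := by
    have hlower := hV w y
    have hupper := hV y w
    rw [norm_sub_rev w y, ← neg_sub y w, inner_neg_right] at hupper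
    have hcs : ⟪G y - G w, y - w⟫ ≤ ‖G y - G w‖ * ‖y - w‖ := real_inner_le_norm _ _
    rw [inner_sub_left] at hcs
    refine le_trans ?_ (le_abs_self _)
    rw [Real.norm_eq_abs, abs_le]
    constructor <;> nlinarith [norm_nonneg (G y - G w), norm_nonneg (y - w)]
  rw [hasGradientAt_iff_isLittleO]
  refine (IsBigO.of_bound' (Eventually.of_forall hbound)).trans_isLittleO ?_
  simpa using ((isLittleO_one_iff ℝ).2 hφ).mul_isBigO (isBigO_refl (fun y => ‖y - w‖) (𝓝 w))

variable {J : E → ℝ} {L lam : ℝ}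

lemma hasDerivAt_comp_add_smul (hJ : Differentiable ℝ J) (x v : E) (t : ℝ) :
    HasDerivAt (fun s : ℝ => J (x + s • v)) ⟪gradient J (x + t • v), v⟫ t := by
  have hline : HasDerivAt (fun s : ℝ => x + s • v) v t := by
    simpa using ((hasDerivAt_id t).smul_const v).const_add x
  rw [← (hJ (x + t • v)).hasGradientAt.fderiv_apply]
  exact (hJ _).hasFDerivAt.comp_hasDerivAt t hline

theorem le_add_inner_gradient_add_sq (hJ : Differentiable ℝ J)
    (hLip : ∀ x y, ‖gradient J x - gradient J y‖ ≤ L * ‖x - y‖) (x y : E) :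
    J y ≤ J x + ⟪gradient J x, y - x⟫ + L / 2 * ‖y - x‖ ^ 2 := by
  set v := y - x
  have hslope (t : ℝ) (ht : t ∈ Ico (0 : ℝ) 1) :
      ⟪gradient J (x + t • v), v⟫ ≤ ⟪gradient J x, v⟫ + L * ‖v‖ ^ 2 * t := by
    have hgrad : ‖gradient J (x + t • v) - gradient J x‖ ≤ L * ‖v‖ * t := by
      simpa [norm_smul, abs_of_nonneg ht.1, mul_comm, mul_left_comm, mul_assoc]
        using hLip (x + t • v) x
    have := (real_inner_le_norm _ v).trans (mul_le_mul_of_nonneg_right hgrad (norm_nonneg v))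
    rw [inner_sub_left] at this
    linarith
  have hbound := image_le_of_deriv_right_le_deriv_boundary
    (f := fun t : ℝ => J (x + t • v))
    (B := fun t => J x + t * ⟪gradient J x, v⟫ + L / 2 * ‖v‖ ^ 2 * t ^ 2)
    (fun t _ => (hasDerivAt_comp_add_smul hJ x v t).continuousAt.continuousWithinAt)
    (fun t _ => (hasDerivAt_comp_add_smul hJ x v t).hasDerivWithinAt)
    (by simp) (by fun_prop)
    (fun t _ => (((hasDerivAt_id t).mul_const _).const_add _ |>.add
      ((hasDerivAt_pow 2 t).const_mul _)).hasDerivWithinAt)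
    (fun t ht => (hslope t ht).trans_eq (by norm_num; ring))
    (right_mem_Icc.2 zero_le_one)
  simpa [v] using hbound

section

variable (hLip : ∀ x y, ‖gradient J x - gradient J y‖ ≤ L * ‖x - y‖)
include hLip

lemma exists_gradient_eq_smul_sub (hL : 0 ≤ L) (hlam : L < lam) (w : E) :
    ∃ θ, gradient J θ = lam • (θ - w) := by
  have hlam₀ : 0 < lam := hL.trans_lt hlam
  set T : E → E := fun θ => w + lam⁻¹ • gradient J θ
  have hT : ContractingWith (L / lam).toNNReal T := by
    refine ⟨Real.toNNReal_lt_one.2 ((div_lt_one hlam₀).2 hlam), ?_⟩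
    refine LipschitzWith.of_dist_le_mul fun θ₁ θ₂ => ?_
    rw [dist_eq_norm, dist_eq_norm, Real.coe_toNNReal _ (div_nonneg hL hlam₀.le),
      add_sub_add_left_eq_sub, ← smul_sub, norm_smul,
      Real.norm_of_nonneg (inv_nonneg.2 hlam₀.le), div_eq_inv_mul, mul_assoc]
    exact mul_le_mul_of_nonneg_left (hLip θ₁ θ₂) (inv_nonneg.2 hlam₀.le)
  set θ := ContractingWith.fixedPoint T hT
  have hfix : w + lam⁻¹ • gradient J θ = θ := hT.fixedPoint_isFixedPt
  refine ⟨θ, ?_⟩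
  rw [← eq_sub_of_add_eq' hfix, smul_inv_smul₀ hlam₀.ne']

lemma lipschitzWith_of_gradient_eq_smul_sub (hL : 0 ≤ L) (hlam : L < lam) {θhat : E → E}
    (hθhat : ∀ w, gradient J (θhat w) = lam • (θhat w - w)) :
    LipschitzWith (lam / (lam - L)).toNNReal θhat := by
  have hlam₀ : 0 < lam := hL.trans_lt hlam
  refine LipschitzWith.of_dist_le_mul fun w₁ w₂ => ?_
  rw [dist_eq_norm, dist_eq_norm, Real.coe_toNNReal _ (div_nonneg hlam₀.le (by linarith)),
    div_mul_eq_mul_div, le_div_iff₀ (sub_pos.2 hlam), mul_comm]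
  calc (lam - L) * ‖θhat w₁ - θhat w₂‖
      ≤ ‖lam • (θhat w₁ - θhat w₂) - (gradient J (θhat w₁) - gradient J (θhat w₂))‖ :=
        sub_mul_norm_sub_le_norm_smul_sub_sub hLip lam _ _
    _ = ‖lam • (w₁ - w₂)‖ := by rw [hθhat, hθhat]; congr 1; module
    _ = lam * ‖w₁ - w₂‖ := by rw [norm_smul, Real.norm_of_nonneg hlam₀.le]

variable (hJ : Differentiable ℝ J)
include hJ

lemma moreauObjective_add_sq_le {w θc : E} (hθc : gradient J θc = lam • (θc - w)) (θ : E) :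
    moreauObjective J lam w θ + (lam - L) / 2 * ‖θ - θc‖ ^ 2 ≤ moreauObjective J lam w θc := by
  have hdescent := le_add_inner_gradient_add_sq hJ hLip θc θ
  have hexpand : ‖θ - w‖ ^ 2 = ‖θc - w‖ ^ 2 + 2 * ⟪θc - w, θ - θc⟫ + ‖θ - θc‖ ^ 2 := by
    rw [← norm_add_sq_real, sub_add_sub_cancel']
  rw [hθc, real_inner_smul_left] at hdescent
  unfold moreauObjective
  rw [hexpand]
  linarith

theorem hasGradientAt_of_eq_ciSup_moreauObjective (hL : 0 ≤ L) (hlam : L < lam) {V : E → ℝ}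
    (hV : ∀ w, V w = ⨆ θ, moreauObjective J lam w θ) {θhat : E → E}
    (hθhat : ∀ w, gradient J (θhat w) = lam • (θhat w - w)) (w : E) :
    HasGradientAt V (lam • (θhat w - w)) w := by
  have hmax (w θ : E) : moreauObjective J lam w θ ≤ moreauObjective J lam w (θhat w) := by
    linarith [moreauObjective_add_sq_le hLip hJ (hθhat w) θ,
      mul_nonneg (half_pos (sub_pos.2 hlam)).le (sq_nonneg ‖θ - θhat w‖)]
  have hVeq (w : E) : V w = moreauObjective J lam w (θhat w) := by
    rw [hV]
    exact ciSup_eq_of_forall_le_of_forall_lt_exists_gt (hmax w) fun _ h => ⟨_, h⟩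
  have hθcont := (lipschitzWith_of_gradient_eq_smul_sub hLip hL hlam hθhat).continuous
  refine hasGradientAt_of_forall_le (G := fun w => lam • (θhat w - w)) (C := lam / 2)
    ((hθcont.sub continuous_id).const_smul lam).continuousAt fun w₁ w₂ => ?_
  rw [hVeq, hVeq, real_inner_smul_left, ← moreauObjective_eq]
  exact hmax w₂ (θhat w₁)

end

theorem moreau_inexact_gradient_error_general
    (d : ℕ)
    (J : EuclideanSpace ℝ (Fin d) → ℝ) (Lhat lam ν : ℝ)
    (hLhat : 0 ≤ Lhat) (hJ : Differentiable ℝ J)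
    (hLip : ∀ x y, ‖gradient J x - gradient J y‖ ≤ Lhat * ‖x - y‖)
    (hlam : Lhat < lam)
    (V : EuclideanSpace ℝ (Fin d) → ℝ)
    (hV : ∀ w, V w = ⨆ θ : EuclideanSpace ℝ (Fin d), (J θ - lam / 2 * ‖θ - w‖ ^ 2))
    (w θtil : EuclideanSpace ℝ (Fin d))
    (hθtil : ‖gradient J θtil - lam • (θtil - w)‖ ≤ ν) :
    ‖lam • (θtil - w) - gradient V w‖ ≤ lam * ν / (lam - Lhat) := by
  choose θhat hθhat using exists_gradient_eq_smul_sub hLip hLhat hlam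
  have hgradV : gradient V w = lam • (θhat w - w) :=
    (hasGradientAt_of_eq_ciSup_moreauObjective hLip hJ hLhat hlam hV hθhat w).gradient
  have hdist : (lam - Lhat) * ‖θtil - θhat w‖ ≤ ν :=
    calc (lam - Lhat) * ‖θtil - θhat w‖
        ≤ ‖lam • (θtil - θhat w) - (gradient J θtil - gradient J (θhat w))‖ :=
          sub_mul_norm_sub_le_norm_smul_sub_sub hLip lam _ _
      _ = ‖gradient J θtil - lam • (θtil - w)‖ := by
          rw [hθhat, ← norm_neg]; congr 1; module
      _ ≤ ν := hθtil
  have hlam₀ : 0 ≤ lam := by linarith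
  rw [hgradV, ← smul_sub, sub_sub_sub_cancel_right, norm_smul, Real.norm_of_nonneg hlam₀,
    mul_div_assoc]
  gcongr
  rwa [le_div_iff₀ (sub_pos.2 hlam), mul_comm]

/-- Inexact envelope gradient: if `‖∇J(θ̃) − λ(θ̃ − w)‖ ≤ ν`, then
`‖λ(θ̃ − w) − ∇V(w)‖ ≤ λν/(λ − L̂)`. -/
theorem moreau_inexact_gradient_error
    (d : ℕ) (hd : 0 < d)
    (J : EuclideanSpace ℝ (Fin d) → ℝ) (Lhat lam ν : ℝ)
    (hLhat : 0 ≤ Lhat) (hJ : Differentiable ℝ J)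
    (hLip : ∀ x y, ‖gradient J x - gradient J y‖ ≤ Lhat * ‖x - y‖)
    (hlam : Lhat < lam) (hν : 0 ≤ ν)
    (V : EuclideanSpace ℝ (Fin d) → ℝ)
    (hV : ∀ w, V w = ⨆ θ : EuclideanSpace ℝ (Fin d), (J θ - lam / 2 * ‖θ - w‖ ^ 2))
    (w θtil : EuclideanSpace ℝ (Fin d))
    (hθtil : ‖gradient J θtil - lam • (θtil - w)‖ ≤ ν) :
    ‖lam • (θtil - w) - gradient V w‖ ≤ lam * ν / (lam - Lhat) :=
  moreau_inexact_gradient_error_general d J Lhat lam ν hLhat hJ hLip hlam V hV w θtil hθtil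
end

section
/- Gradient bound for the policy-gradient value function (Lemma 1, part 1): with the finite-MDP setup below, if additionally 0 ≤ r(s,a) ≤ R for all s, a and ‖∇_w log π(a|s;w)‖ ≤ G for all a, s, w, then for every w ∈ E the gradient of the value function J(w) = Σ_τ q(τ; w) R(τ) satisfies ‖∇J(w)‖ ≤ GR/(1 − γ)². -/
/-!
The likelihood-ratio identity `∇q(τ) = q(τ) • ∑ₕ gₕ`, with `gₕ = ∇log π(aₕ|sₕ)`, makes `∇J(w)` the
expectation of `R(τ) • ∑ₕ gₕ`. Conditioning on the first step `(s₀, a₀)` and writing `τ'` for the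
rest of the trajectory, with score `σ(τ') = ∑ₕ gₕ(τ')`, this is the expectation of
`r₀ • g₀ + γ R(τ') • g₀ + r₀ • σ(τ') + γ R(τ') • σ(τ')`.
The score has mean zero (differentiate `∑ₐ π(a|s) = 1`), so the third term vanishes, and the
expected return is at most `R / (1 - γ)`. Hence a bound `B` for the last term propagates as
`B ↦ RG + γRG / (1 - γ) + γB`, whose fixed point `GR / (1 - γ)²` bounds every horizon.
-/

open Finset

section LogDeriv

variable {E : Type*} [NormedAddCommGroup E] [NormedSpace ℝ E] {w : E}

theorem hasFDerivAt_of_differentiableAt_log {f : E → ℝ} (hf : ∀ v, 0 < f v)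
    (hd : DifferentiableAt ℝ (fun v => Real.log (f v)) w) :
    HasFDerivAt f (f w • fderiv ℝ (fun v => Real.log (f v)) w) w := by
  simpa only [Real.exp_log (hf _)] using hd.hasFDerivAt.exp

theorem hasFDerivAt_prod_of_differentiableAt_log {ι : Type*} (s : Finset ι) {f : ι → E → ℝ}
    (hf : ∀ i v, 0 < f i v) (hd : ∀ i ∈ s, DifferentiableAt ℝ (fun v => Real.log (f i v)) w) :
    HasFDerivAt (fun v => ∏ i ∈ s, f i v)
      ((∏ i ∈ s, f i w) • ∑ i ∈ s, fderiv ℝ (fun v => Real.log (f i v)) w) w := by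
  have hlog : (fun v => Real.log (∏ i ∈ s, f i v)) = fun v => ∑ i ∈ s, Real.log (f i v) :=
    funext fun v => Real.log_prod fun i _ => (hf i v).ne'
  have hsum := HasFDerivAt.fun_sum fun i hi => (hd i hi).hasFDerivAt
  have := hasFDerivAt_of_differentiableAt_log (fun v => prod_pos fun i _ => hf i v)
    (hlog ▸ hsum.differentiableAt)
  rwa [hlog, hsum.fderiv] at this

theorem sum_smul_fderiv_log_eq_zero {ι : Type*} [Fintype ι] {f : ι → E → ℝ}
    (hf : ∀ i v, 0 < f i v) (hsum : ∀ v, ∑ i, f i v = 1)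
    (hd : ∀ i, DifferentiableAt ℝ (fun v => Real.log (f i v)) w) :
    ∑ i, f i w • fderiv ℝ (fun v => Real.log (f i v)) w = 0 := by
  have hconst : HasFDerivAt (fun v => ∑ i, f i v) (0 : E →L[ℝ] ℝ) w := by
    simpa only [hsum] using hasFDerivAt_const (1 : ℝ) w
  exact (HasFDerivAt.fun_sum fun i _ =>
    hasFDerivAt_of_differentiableAt_log (hf i) (hd i)).unique hconst

end LogDeriv

theorem norm_gradient_eq_norm_fderiv {F : Type*} [NormedAddCommGroup F] [InnerProductSpace ℝ F]
    [CompleteSpace F] (f : F → ℝ) (x : F) : ‖gradient f x‖ = ‖fderiv ℝ f x‖ :=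
  (InnerProductSpace.toDual ℝ F).symm.norm_map _

abbrev Traj (S A : Type*) (m : ℕ) := (Fin (m + 1) → S) × (Fin m → A)

namespace Traj

variable {S A M E : Type*} [NormedAddCommGroup E] [NormedSpace ℝ E] {m : ℕ}

def init (s : S) : Traj S A 0 := (fun _ => s, finZeroElim)

def cons (s : S) (a : A) (τ : Traj S A m) : Traj S A (m + 1) :=
  (Fin.cons s τ.1, Fin.cons a τ.2)

def consEquiv : S × A × Traj S A m ≃ Traj S A (m + 1) :=
  ((Equiv.prodAssoc S A _).symm.trans (Equiv.prodProdProdComm S A _ _)).trans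
    ((Fin.consEquiv fun _ => S).prodCongr (Fin.consEquiv fun _ => A))

def discountedSum [AddCommMonoid M] [Module ℝ M] (γ : ℝ) (f : S → A → M) (τ : Traj S A m) : M :=
  ∑ h : Fin m, γ ^ (h : ℕ) • f (τ.1 h.castSucc) (τ.2 h)

theorem discountedSum_cons [AddCommMonoid M] [Module ℝ M] (γ : ℝ) (f : S → A → M) (s : S)
    (a : A) (τ : Traj S A m) :
    discountedSum γ f (cons s a τ) = f s a + γ • discountedSum γ f τ := by
  simp only [discountedSum, cons, Fin.sum_univ_succ, Fin.cons_zero, Fin.cons_succ,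
    Fin.castSucc_zero, ← Fin.succ_castSucc, Fin.val_zero, pow_zero, one_smul, Fin.val_succ,
    pow_succ', mul_smul, smul_sum]

def prob (p : S → A → ℝ) (P : S → A → S → ℝ) (ν : S → ℝ) (τ : Traj S A m) : ℝ :=
  ν (τ.1 0) * (∏ h, p (τ.1 h.castSucc) (τ.2 h)) * ∏ h, P (τ.1 h.castSucc) (τ.2 h) (τ.1 h.succ)

variable {p : S → A → ℝ} {P : S → A → S → ℝ} {π : S → A → E → ℝ} {w : E}

theorem prob_init (ν : S → ℝ) (s : S) : prob p P ν (init (A := A) s) = ν s := by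
  simp [prob, init]

theorem prob_cons (ν : S → ℝ) (s : S) (a : A) (τ : Traj S A m) :
    prob p P ν (cons s a τ) = ν s * p s a * prob p P (P s a) τ := by
  simp only [prob, cons, Fin.prod_univ_succ, Fin.cons_zero, Fin.cons_succ, Fin.castSucc_zero,
    ← Fin.succ_castSucc]
  ring

theorem hasFDerivAt_prob (hπ : ∀ s a v, 0 < π s a v)
    (hd : ∀ s a, DifferentiableAt ℝ (fun v => Real.log (π s a v)) w) (ν : S → ℝ)
    (τ : Traj S A m) :
    HasFDerivAt (fun v => prob (fun s a => π s a v) P ν τ)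
      (prob (fun s a => π s a w) P ν τ •
        discountedSum 1 (fun s a => fderiv ℝ (fun v => Real.log (π s a v)) w) τ) w := by
  refine (((hasFDerivAt_prod_of_differentiableAt_log univ (fun h => hπ _ _)
    fun h _ => hd _ _).const_mul (ν (τ.1 0))).mul_const _).congr_fderiv ?_
  simp only [prob, discountedSum, one_pow, one_smul, smul_smul]
  congr 1
  ring

variable [Fintype S] [Fintype A]

theorem sum_eq_sum_init [AddCommMonoid M] (f : Traj S A 0 → M) :
    ∑ τ, f τ = ∑ s, f (init s) :=
  (((Equiv.prodUnique _ _).trans (Equiv.funUnique (Fin 1) S)).symm.sum_comp f).symm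

theorem sum_univ_succ [AddCommMonoid M] (f : Traj S A (m + 1) → M) :
    ∑ τ, f τ = ∑ s, ∑ a, ∑ τ, f (cons s a τ) := by
  rw [← consEquiv.sum_comp]
  simp only [Fintype.sum_prod_type]
  rfl

def expect [AddCommMonoid M] [Module ℝ M] (p : S → A → ℝ) (P : S → A → S → ℝ) (ν : S → ℝ)
    (f : Traj S A m → M) : M :=
  ∑ τ, prob p P ν τ • f τ

section Linear

variable [AddCommMonoid M] [Module ℝ M] (ν : S → ℝ)

theorem expect_init (f : Traj S A 0 → M) : expect p P ν f = ∑ s, ν s • f (init s) := by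
  simp only [expect, sum_eq_sum_init, prob_init]

theorem expect_succ (f : Traj S A (m + 1) → M) :
    expect p P ν f = ∑ s, ν s • ∑ a, p s a • expect p P (P s a) (fun τ => f (cons s a τ)) := by
  simp only [expect, sum_univ_succ (fun τ => prob p P ν τ • f τ), prob_cons, mul_smul, smul_sum]

theorem expect_add (f g : Traj S A m → M) :
    expect p P ν (fun τ => f τ + g τ) = expect p P ν f + expect p P ν g := by
  simp only [expect, smul_add, sum_add_distrib]

theorem expect_smul (c : ℝ) (f : Traj S A m → M) :
    expect p P ν (fun τ => c • f τ) = c • expect p P ν f := by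
  simp only [expect, smul_sum, smul_comm c]

theorem expect_smul_const (φ : Traj S A m → ℝ) (x : M) :
    expect p P ν (fun τ => φ τ • x) = expect p P ν φ • x := by
  simp only [expect, sum_smul, smul_eq_mul, mul_smul]

end Linear

theorem hasFDerivAt_expect (hπ : ∀ s a v, 0 < π s a v)
    (hd : ∀ s a, DifferentiableAt ℝ (fun v => Real.log (π s a v)) w) (ν : S → ℝ)
    (f : Traj S A m → ℝ) :
    HasFDerivAt (fun v => expect (fun s a => π s a v) P ν f)
      (expect (fun s a => π s a w) P ν fun τ =>
        f τ • discountedSum 1 (fun s a => fderiv ℝ (fun v => Real.log (π s a v)) w) τ) w := by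
  refine (HasFDerivAt.fun_sum fun τ _ =>
    (hasFDerivAt_prob hπ hd ν τ).mul_const (f τ)).congr_fderiv ?_
  simp only [expect, smul_comm (f _)]

theorem expect_one (hp : ∀ s, ∑ a, p s a = 1) (hP : ∀ s a, ∑ s', P s a s' = 1)
    {ν : S → ℝ} (hν : ∑ s, ν s = 1) : expect p P ν (fun _ : Traj S A m => (1 : ℝ)) = 1 := by
  induction m generalizing ν with
  | zero => simpa [expect_init] using hν
  | succ m ih => simp [expect_succ, ih (hP _ _), hp, hν]

theorem expect_const [AddCommMonoid M] [Module ℝ M] (hp : ∀ s, ∑ a, p s a = 1)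
    (hP : ∀ s a, ∑ s', P s a s' = 1) {ν : S → ℝ} (hν : ∑ s, ν s = 1) (x : M) :
    expect p P ν (fun _ : Traj S A m => x) = x := by
  simpa [expect_one hp hP hν] using expect_smul_const (p := p) (P := P) ν (fun _ => 1) x

theorem expect_discountedSum_eq_zero [AddCommMonoid M] [Module ℝ M] (hp : ∀ s, ∑ a, p s a = 1)
    (hP : ∀ s a, ∑ s', P s a s' = 1) {f : S → A → M} (hf : ∀ s, ∑ a, p s a • f s a = 0)
    (γ : ℝ) (ν : S → ℝ) : expect p P ν (discountedSum (m := m) γ f) = 0 := by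
  induction m generalizing ν with
  | zero => simp [expect, discountedSum]
  | succ m ih =>
    simp [expect_succ, discountedSum_cons, expect_add, expect_smul, expect_const hp hP (hP _ _),
      ih, hf]

section Norm

variable [NormedAddCommGroup M] [NormedSpace ℝ M]

theorem norm_expect_succ_le {ν : S → ℝ} (hν : ν ∈ stdSimplex ℝ S)
    (hp : ∀ s, p s ∈ stdSimplex ℝ A) {f : Traj S A (m + 1) → M} {B : ℝ}
    (hf : ∀ s a, ‖expect p P (P s a) (fun τ => f (cons s a τ))‖ ≤ B) :
    ‖expect p P ν f‖ ≤ B := by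
  rw [← mem_closedBall_zero_iff, expect_succ]
  refine (convex_closedBall _ _).sum_mem (fun s _ => hν.1 s) hν.2 fun s _ => ?_
  exact (convex_closedBall _ _).sum_mem (fun a _ => (hp s).1 a) (hp s).2
    fun a _ => mem_closedBall_zero_iff.2 (hf s a)

theorem norm_expect_discountedSum_le (hp : ∀ s, p s ∈ stdSimplex ℝ A)
    (hP : ∀ s a, P s a ∈ stdSimplex ℝ S) {f : S → A → M} {B γ : ℝ} (hf : ∀ s a, ‖f s a‖ ≤ B)
    (hB : 0 ≤ B) (hγ0 : 0 ≤ γ) (hγ1 : γ < 1) {ν : S → ℝ} (hν : ν ∈ stdSimplex ℝ S) :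
    ‖expect p P ν (discountedSum (m := m) γ f)‖ ≤ B / (1 - γ) := by
  induction m generalizing ν with
  | zero =>
    simp only [expect, discountedSum, univ_eq_empty, sum_empty, smul_zero, sum_const_zero,
      norm_zero]
    exact div_nonneg hB (sub_nonneg.2 hγ1.le)
  | succ m ih =>
    refine norm_expect_succ_le hν hp fun s a => ?_
    simp only [discountedSum_cons, expect_add, expect_smul,
      expect_const (fun s => (hp s).2) (fun s a => (hP s a).2) (hP s a).2]
    calc ‖f s a + γ • expect p P (P s a) (discountedSum γ f)‖
        ≤ B + γ * (B / (1 - γ)) := by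
          refine (norm_add_le _ _).trans (add_le_add (hf s a) ?_)
          rw [norm_smul, Real.norm_of_nonneg hγ0]
          exact mul_le_mul_of_nonneg_left (ih (hP s a)) hγ0
      _ = B / (1 - γ) := by field_simp [(sub_pos.2 hγ1).ne']; ring

theorem norm_expect_discountedSum_smul_le (hp : ∀ s, p s ∈ stdSimplex ℝ A)
    (hP : ∀ s a, P s a ∈ stdSimplex ℝ S) {r : S → A → ℝ} {g : S → A → M} {R G γ : ℝ}
    (hr : ∀ s a, ‖r s a‖ ≤ R) (hg : ∀ s a, ‖g s a‖ ≤ G) (hgp : ∀ s, ∑ a, p s a • g s a = 0)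
    (hR : 0 ≤ R) (hG : 0 ≤ G) (hγ0 : 0 ≤ γ) (hγ1 : γ < 1) {ν : S → ℝ}
    (hν : ν ∈ stdSimplex ℝ S) :
    ‖expect p P ν (fun τ : Traj S A m => discountedSum γ r τ • discountedSum 1 g τ)‖
      ≤ G * R / (1 - γ) ^ 2 := by
  have hp1 : ∀ s, ∑ a, p s a = 1 := fun s => (hp s).2
  have hP1 : ∀ s a, ∑ s', P s a s' = 1 := fun s a => (hP s a).2
  induction m generalizing ν with
  | zero =>
    simp only [expect, discountedSum, univ_eq_empty, sum_empty, smul_zero, sum_const_zero,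
      norm_zero]
    positivity
  | succ m ih =>
    refine norm_expect_succ_le hν hp fun s a => ?_
    simp only [discountedSum_cons, add_smul, smul_add, one_smul, expect_add, expect_smul,
      smul_assoc, expect_smul_const, expect_const hp1 hP1 (hP1 s a),
      expect_discountedSum_eq_zero hp1 hP1 hgp, smul_zero, zero_add]
    have hret := norm_expect_discountedSum_le (m := m) hp hP hr hR hγ0 hγ1 (hP s a)
    calc _ ≤ ‖r s a • g s a‖ + ‖γ • expect p P (P s a) (discountedSum γ r) • g s a‖
          + ‖γ • expect p P (P s a) fun τ => discountedSum γ r τ • discountedSum 1 g τ‖ :=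
          norm_add₃_le
      _ ≤ R * G + γ * (R / (1 - γ) * G) + γ * (G * R / (1 - γ) ^ 2) := by
        simp only [norm_smul, Real.norm_of_nonneg hγ0]
        gcongr
        exacts [hr s a, hg s a, hg s a, ih (hP s a)]
      _ = G * R / (1 - γ) ^ 2 := by field_simp [(sub_pos.2 hγ1).ne']; ring

end Norm

end Traj

theorem policy_gradient_norm_bound_general
    (S A : Type*) [Fintype S] [Fintype A] [Nonempty S] [Nonempty A]
    (H d : ℕ)
    (μ : S → ℝ) (hμ0 : ∀ s, 0 ≤ μ s) (hμ1 : ∑ s, μ s = 1)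
    (P : S → A → S → ℝ) (hP0 : ∀ s a s', 0 ≤ P s a s')
    (hP1 : ∀ s a, ∑ s', P s a s' = 1)
    (r : S → A → ℝ) (R : ℝ) (hr : ∀ s a, 0 ≤ r s a ∧ r s a ≤ R)
    (γ : ℝ) (hγ0 : 0 < γ) (hγ1 : γ < 1)
    (π : A → S → EuclideanSpace ℝ (Fin d) → ℝ)
    (hπ0 : ∀ a s w, 0 < π a s w) (hπ1 : ∀ s w, ∑ a, π a s w = 1)
    (hπC : ∀ a s, ContDiff ℝ 1 (fun w => Real.log (π a s w)))
    (G : ℝ)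
    (hG : ∀ (a : A) (s : S) (w : EuclideanSpace ℝ (Fin d)),
      ‖gradient (fun v => Real.log (π a s v)) w‖ ≤ G)
    (q : ((Fin (H + 1) → S) × (Fin H → A)) → EuclideanSpace ℝ (Fin d) → ℝ)
    (hq : ∀ τ w, q τ w =
      μ (τ.1 0) * (∏ h : Fin H, π (τ.2 h) (τ.1 h.castSucc) w)
        * ∏ h : Fin H, P (τ.1 h.castSucc) (τ.2 h) (τ.1 h.succ))
    (Rew : ((Fin (H + 1) → S) × (Fin H → A)) → ℝ)
    (hRew : ∀ τ, Rew τ = ∑ h : Fin H, γ ^ (h : ℕ) * r (τ.1 h.castSucc) (τ.2 h))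
    (J : EuclideanSpace ℝ (Fin d) → ℝ)
    (hJ : ∀ w, J w = ∑ τ : (Fin (H + 1) → S) × (Fin H → A), q τ w * Rew τ) :
    ∀ w : EuclideanSpace ℝ (Fin d),
      ‖gradient J w‖ ≤ G * R / (1 - γ) ^ 2 := by
  intro w
  obtain ⟨s₀⟩ := ‹Nonempty S›
  obtain ⟨a₀⟩ := ‹Nonempty A›
  have hlog : ∀ s a, DifferentiableAt ℝ (fun v => Real.log (π a s v)) w :=
    fun s a => (hπC a s).differentiable one_ne_zero w
  have hscore : ∀ s a, ‖fderiv ℝ (fun v => Real.log (π a s v)) w‖ ≤ G := fun s a =>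
    norm_gradient_eq_norm_fderiv (fun v => Real.log (π a s v)) w ▸ hG a s w
  have hJ_expect : J = fun v => Traj.expect (fun s a => π a s v) P μ (Traj.discountedSum γ r) :=
    funext fun v => by simp only [hJ, hq, hRew]; rfl
  rw [norm_gradient_eq_norm_fderiv, hJ_expect,
    (Traj.hasFDerivAt_expect (fun s a => hπ0 a s) hlog μ _).fderiv]
  exact Traj.norm_expect_discountedSum_smul_le (fun s => ⟨fun a => (hπ0 a s w).le, hπ1 s w⟩)
    (fun s a => ⟨hP0 s a, hP1 s a⟩)
    (fun s a => (Real.norm_of_nonneg (hr s a).1).trans_le (hr s a).2) hscore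
    (fun s => sum_smul_fderiv_log_eq_zero (fun a => hπ0 a s) (hπ1 s) (hlog s))
    ((hr s₀ a₀).1.trans (hr s₀ a₀).2) ((norm_nonneg _).trans (hscore s₀ a₀)) hγ0.le hγ1
    ⟨hμ0, hμ1⟩

/-- Gradient bound for the policy-gradient value function (Lemma 1, part 1):
if `0 ≤ r ≤ R` and `‖∇_w log π(a|s;w)‖ ≤ G`, then `‖∇J(w)‖ ≤ GR/(1−γ)²`. -/
theorem policy_gradient_norm_bound
    (S A : Type*) [Fintype S] [Fintype A] [Nonempty S] [Nonempty A]
    (H d : ℕ) (hH : 0 < H) (hd : 0 < d)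
    (μ : S → ℝ) (hμ0 : ∀ s, 0 ≤ μ s) (hμ1 : ∑ s, μ s = 1)
    (P : S → A → S → ℝ) (hP0 : ∀ s a s', 0 ≤ P s a s')
    (hP1 : ∀ s a, ∑ s', P s a s' = 1)
    (r : S → A → ℝ) (R : ℝ) (hr : ∀ s a, 0 ≤ r s a ∧ r s a ≤ R)
    (γ : ℝ) (hγ0 : 0 < γ) (hγ1 : γ < 1)
    (π : A → S → EuclideanSpace ℝ (Fin d) → ℝ)
    (hπ0 : ∀ a s w, 0 < π a s w) (hπ1 : ∀ s w, ∑ a, π a s w = 1)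
    (hπC : ∀ a s, ContDiff ℝ 1 (fun w => Real.log (π a s w)))
    (G : ℝ)
    (hG : ∀ (a : A) (s : S) (w : EuclideanSpace ℝ (Fin d)),
      ‖gradient (fun v => Real.log (π a s v)) w‖ ≤ G)
    (q : ((Fin (H + 1) → S) × (Fin H → A)) → EuclideanSpace ℝ (Fin d) → ℝ)
    (hq : ∀ τ w, q τ w =
      μ (τ.1 0) * (∏ h : Fin H, π (τ.2 h) (τ.1 h.castSucc) w)
        * ∏ h : Fin H, P (τ.1 h.castSucc) (τ.2 h) (τ.1 h.succ))
    (Rew : ((Fin (H + 1) → S) × (Fin H → A)) → ℝ)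
    (hRew : ∀ τ, Rew τ = ∑ h : Fin H, γ ^ (h : ℕ) * r (τ.1 h.castSucc) (τ.2 h))
    (J : EuclideanSpace ℝ (Fin d) → ℝ)
    (hJ : ∀ w, J w = ∑ τ : (Fin (H + 1) → S) × (Fin H → A), q τ w * Rew τ) :
    ∀ w : EuclideanSpace ℝ (Fin d),
      ‖gradient J w‖ ≤ G * R / (1 - γ) ^ 2 :=
  policy_gradient_norm_bound_general S A H d μ hμ0 hμ1 P hP0 hP1 r R hr γ hγ0 hγ1 π hπ0 hπ1 hπC G hG
    q hq Rew hRew J hJ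
end
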